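/- Let q and z be points of the Euclidean plane ℝ² with q ≠ z, let d = dist(q, z), and let δ be a real number with 0 < δ ≤ d. Then the set of angles θ ∈ [0, 2π) such that the ray {q + t·(cos θ, sin θ) : t ≥ 0} meets the closed ball of radius δ centered at z has one-dimensional Lebesgue measure at least 2δ/d. -/

import Mathlib

/-! The direction of `z - q` is some angle `θ₀`, and every direction `θ` with
`|θ - θ₀| ≤ arcsin (δ / d)` hits the ball: the foot of the perpendicular from `z` to that
ray lies at distance `d |sin (θ - θ₀)| ≤ δ` from `z`. These directions form an arc of length
`2 arcsin (δ / d) ≥ 2δ / d` on the circle `ℝ / 2πℤ`, and `[0, 2π)` is a fundamental domain of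
that circle, so the arc's measure is seen in `[0, 2π)` whatever the position of `θ₀`. -/

open MeasureTheory

/-- The unit vector in the Euclidean plane in direction `θ`. -/
noncomputable def planeDir (θ : ℝ) : EuclideanSpace ℝ (Fin 2) :=
  (WithLp.equiv 2 (Fin 2 → ℝ)).symm ![Real.cos θ, Real.sin θ]

open Real Set

theorem exists_nonneg_add_smul_mem_closedBall {E : Type*} [NormedAddCommGroup E]
    [InnerProductSpace ℝ E] {q z u : E} {δ : ℝ} (hδ : 0 ≤ δ) (hu : ‖u‖ = 1)
    (h₀ : 0 ≤ inner ℝ (z - q) u) (h : ‖z - q‖ ^ 2 - inner ℝ (z - q) u ^ 2 ≤ δ ^ 2) :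
    ∃ t : ℝ, 0 ≤ t ∧ q + t • u ∈ Metric.closedBall z δ := by
  refine ⟨inner ℝ (z - q) u, h₀, ?_⟩
  have hdist :
      dist (q + inner ℝ (z - q) u • u) z ^ 2 = ‖z - q‖ ^ 2 - inner ℝ (z - q) u ^ 2 := by
    rw [dist_eq_norm, add_sub_right_comm, ← neg_sub z q, ← sub_eq_neg_add, norm_sub_sq_real,
      norm_smul, hu, mul_one, Real.norm_eq_abs, sq_abs, real_inner_smul_left, real_inner_comm]
    ring
  rw [Metric.mem_closedBall]
  exact (pow_le_pow_iff_left₀ dist_nonneg hδ two_ne_zero).mp (hdist ▸ h)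

@[simp] theorem planeDir_apply_zero (θ : ℝ) : planeDir θ 0 = cos θ := rfl
@[simp] theorem planeDir_apply_one (θ : ℝ) : planeDir θ 1 = sin θ := rfl

theorem periodic_planeDir : Function.Periodic planeDir (2 * π) := by
  intro θ
  ext i
  fin_cases i <;> simp

theorem inner_planeDir_planeDir (a b : ℝ) :
    inner ℝ (planeDir a) (planeDir b) = cos (a - b) := by
  simp [PiLp.inner_apply, Fin.sum_univ_two, cos_sub]
  ring

theorem norm_planeDir (θ : ℝ) : ‖planeDir θ‖ = 1 := by
  rw [norm_eq_sqrt_real_inner, inner_planeDir_planeDir, sub_self, cos_zero, sqrt_one]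

theorem exists_eq_norm_smul_planeDir (v : EuclideanSpace ℝ (Fin 2)) :
    ∃ θ, v = ‖v‖ • planeDir θ := by
  set w : ℂ := ⟨v 0, v 1⟩
  have hw : ‖w‖ = ‖v‖ := by
    rw [Complex.norm_def, Complex.normSq_mk, EuclideanSpace.norm_eq, Fin.sum_univ_two,
      Real.norm_eq_abs, Real.norm_eq_abs, sq_abs, sq_abs, ← sq, ← sq]
  rcases eq_or_ne w 0 with h | h
  · refine ⟨0, ?_⟩
    rw [← hw, h, norm_zero, zero_smul]
    ext i
    fin_cases i
    · exact congrArg Complex.re h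
    · exact congrArg Complex.im h
  · refine ⟨Complex.arg w, ?_⟩
    have hv : ‖v‖ ≠ 0 := hw ▸ norm_ne_zero_iff.mpr h
    ext i
    fin_cases i
    · simp [Complex.cos_arg h, hw, w]
      field_simp
    · simp [Complex.sin_arg, hw, w]
      field_simp

theorem Real.abs_sin_le_of_abs_le_arcsin {x r : ℝ} (h : |x| ≤ arcsin r) : |sin x| ≤ r := by
  have hx : |x| ≤ π / 2 := h.trans (arcsin_le_pi_div_two r)
  have habs : |sin x| = sin |x| := by
    rcases abs_cases x with ⟨hx', hx0⟩ | ⟨hx', hx0⟩ <;> rw [hx'] at hx ⊢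
    · exact abs_of_nonneg (sin_nonneg_of_nonneg_of_le_pi hx0 (by linarith [pi_pos]))
    · rw [sin_neg]
      exact abs_of_nonpos (sin_nonpos_of_nonpos_of_neg_pi_le hx0.le (by linarith [pi_pos]))
  rw [habs]
  exact (le_arcsin_iff_sin_le' ⟨by linarith [abs_nonneg x, pi_pos], hx⟩).mp h

theorem Function.Periodic.ofReal_two_mul_le_volume_sep_Ico {T : ℝ} {P : ℝ → Prop}
    (hP : Function.Periodic P T) (hT : 0 < T) {c s : ℝ} (hsT : 2 * s ≤ T)
    (hPc : ∀ x, |x - c| ≤ s → P x) (a : ℝ) :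
    ENNReal.ofReal (2 * s) ≤ volume {x ∈ Ico a (a + T) | P x} := by
  have : Fact (0 < T) := ⟨hT⟩
  set arc := ((↑) : ℝ → AddCircle T) ⁻¹' Metric.closedBall (c : AddCircle T) s
  have harc : arc ⊆ {x | P x} := by
    intro x hx
    rw [mem_preimage, Metric.mem_closedBall, dist_eq_norm, ← AddCircle.coe_sub,
      AddCircle.norm_eq, sub_right_comm] at hx
    exact (hP.sub_int_mul_eq _).mp (hPc _ hx)
  calc ENNReal.ofReal (2 * s) = volume (Metric.closedBall (c : AddCircle T) s) := by
        rw [AddCircle.volume_closedBall, min_eq_right hsT]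
    _ = volume (arc ∩ Ioc a (a + T)) :=
        AddCircle.add_projection_respects_measure T a Metric.isClosed_closedBall.measurableSet
    _ = volume (arc ∩ Ico a (a + T)) := measure_congr ((ae_eq_refl _).inter Ico_ae_eq_Ioc.symm)
    _ ≤ volume {x ∈ Ico a (a + T) | P x} := measure_mono fun x hx => ⟨hx.2, harc hx.1⟩

theorem exists_ray_mem_closedBall_of_abs_sub_le_arcsin {q z : EuclideanSpace ℝ (Fin 2)}
    {δ θ₀ θ : ℝ} (hδ : 0 ≤ δ) (hθ₀ : z - q = dist q z • planeDir θ₀)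
    (hθ : |θ - θ₀| ≤ arcsin (δ / dist q z)) :
    ∃ t : ℝ, 0 ≤ t ∧ q + t • planeDir θ ∈ Metric.closedBall z δ := by
  set d := dist q z
  have hd : 0 ≤ d := dist_nonneg
  have hinner : inner ℝ (z - q) (planeDir θ) = d * cos (θ - θ₀) := by
    rw [hθ₀, real_inner_smul_left, inner_planeDir_planeDir, ← cos_neg, neg_sub]
  have hnorm : ‖z - q‖ = d := by rw [← dist_eq_norm, dist_comm]
  have hcos : 0 ≤ cos (θ - θ₀) :=
    cos_nonneg_of_mem_Icc (abs_le.mp (hθ.trans (arcsin_le_pi_div_two _)))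
  have hsin : d * |sin (θ - θ₀)| ≤ δ := by
    calc d * |sin (θ - θ₀)| ≤ d * (δ / d) :=
          mul_le_mul_of_nonneg_left (abs_sin_le_of_abs_le_arcsin hθ) hd
      _ ≤ δ := by
          rcases hd.eq_or_lt with h | h
          · rw [← h, zero_mul]; exact hδ
          · rw [mul_div_cancel₀ _ h.ne']
  refine exists_nonneg_add_smul_mem_closedBall hδ (norm_planeDir θ) (hinner ▸ by positivity) ?_
  rw [hinner, hnorm]
  calc d ^ 2 - (d * cos (θ - θ₀)) ^ 2 = (d * |sin (θ - θ₀)|) ^ 2 := by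
        rw [mul_pow, mul_pow, sq_abs, sin_sq]; ring
    _ ≤ δ ^ 2 := pow_le_pow_left₀ (by positivity) hsin 2

theorem Real.le_arcsin_self {x : ℝ} (h₀ : 0 ≤ x) (h₁ : x ≤ 1) : x ≤ arcsin x := by
  simpa [sin_arcsin (by linarith) h₁] using sin_le (arcsin_nonneg.mpr h₀)

theorem measure_directions_hitting_ball_ge_general (q z : EuclideanSpace ℝ (Fin 2))
    (δ : ℝ) (hδ : 0 < δ) (hδd : δ ≤ dist q z) :
    ENNReal.ofReal (2 * δ / dist q z) ≤
      volume {θ ∈ Set.Ico 0 (2 * Real.pi) |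
        ∃ t : ℝ, 0 ≤ t ∧ q + t • planeDir θ ∈ Metric.closedBall z δ} := by
  have hd : 0 < dist q z := hδ.trans_le hδd
  obtain ⟨θ₀, hθ₀⟩ := exists_eq_norm_smul_planeDir (z - q)
  rw [← dist_eq_norm, dist_comm] at hθ₀
  have hperiodic : Function.Periodic
      (fun θ => ∃ t : ℝ, 0 ≤ t ∧ q + t • planeDir θ ∈ Metric.closedBall z δ) (2 * π) :=
    periodic_planeDir.comp fun u => ∃ t : ℝ, 0 ≤ t ∧ q + t • u ∈ Metric.closedBall z δ
  calc ENNReal.ofReal (2 * δ / dist q z)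
    _ ≤ ENNReal.ofReal (2 * arcsin (δ / dist q z)) := by
      rw [mul_div_assoc]
      gcongr
      exact le_arcsin_self (by positivity) ((div_le_one hd).mpr hδd)
    _ ≤ _ := by
      simpa using hperiodic.ofReal_two_mul_le_volume_sep_Ico two_pi_pos
        (by linarith [arcsin_le_pi_div_two (δ / dist q z), pi_pos])
        (fun θ hθ => exists_ray_mem_closedBall_of_abs_sub_le_arcsin hδ.le hθ₀ hθ) 0

/-- The set of directions `θ ∈ [0, 2π)` whose ray from `q` meets the closed `δ`-ball
around `z` (with `0 < δ ≤ d = dist q z`) has Lebesgue measure at least `2δ/d`. -/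
theorem measure_directions_hitting_ball_ge (q z : EuclideanSpace ℝ (Fin 2)) (hqz : q ≠ z)
    (δ : ℝ) (hδ : 0 < δ) (hδd : δ ≤ dist q z) :
    ENNReal.ofReal (2 * δ / dist q z) ≤
      volume {θ ∈ Set.Ico 0 (2 * Real.pi) |
        ∃ t : ℝ, 0 ≤ t ∧ q + t • planeDir θ ∈ Metric.closedBall z δ} :=
  measure_directions_hitting_ball_ge_general q z δ hδ hδd
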